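/- Let π_r(t) = Pr[Bin(k_p t, p) + Bin(k_q t, q) ≥ r]. Under the hypotheses t ≥ 4r, p ≥ q in (0, 1/2], φ x t ≤ 1/3, xt an integer, and additionally 3x(1-p) > 4, we have π_r(t) ≤ 4 (4/(3x(1-p)))^r π_r(xt). -/

import Mathlib

/-!
With `a = φ t` and `b = φ x t`, the sum of the two binomials has mean `a` at time `t`.
Bounding `C(n, i) ≤ nⁱ / i!` and the binomial theorem give `P[S = k] ≤ aᵏ / k!`, so for
`a ≤ 1/3` the tail is at most `(3/2) aʳ / r!`. At time `x t`, since `4 r ≤ t ≤ x t` we have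
`C(n, i) ≥ (3n/4)ⁱ / i!`, and Weierstrass' product inequality gives
`(1-p)^(kp x t) (1-q)^(kq x t) ≥ 1 - b ≥ 2/3`, so `P[S = r] ≥ (2/3) (3b/4)ʳ / r!`.
The ratio of the two bounds is `(9/4) (4 a / (3 b))ʳ = (9/4) (4 / (3x))ʳ`.
-/

open Finset

/-- The probability that `Bin(m, p) + Bin(n, q) = k`, for independent binomials. -/
noncomputable def twoBinomialPMF (m n : ℕ) (p q : ℝ) (k : ℕ) : ℝ :=
  ∑ i ∈ range (k + 1),
    (m.choose i : ℝ) * p ^ i * (1 - p) ^ (m - i) *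
    (n.choose (k - i) : ℝ) * q ^ (k - i) * (1 - q) ^ (n - (k - i))

theorem add_pow_div_factorial (u v : ℝ) (k : ℕ) :
    ∑ i ∈ range (k + 1), u ^ i / i.factorial * (v ^ (k - i) / (k - i).factorial) =
      (u + v) ^ k / k.factorial := by
  rw [add_pow, sum_div]
  refine sum_congr rfl fun i hi => ?_
  rw [Nat.cast_choose ℝ (Nat.lt_succ_iff.mp (mem_range.mp hi))]
  field_simp

theorem pow_div_factorial_le_choose {n i : ℕ} (h : 4 * i ≤ n) :
    (3 / 4 * n : ℝ) ^ i / i.factorial ≤ n.choose i := by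
  rw [div_le_iff₀ (by positivity)]
  have hle : (3 / 4 * n : ℝ) ≤ ((n + 1 - i : ℕ) : ℝ) := by
    have h' : (4 * i : ℝ) ≤ n := by exact_mod_cast h
    rw [Nat.cast_sub (by omega)]
    push_cast
    linarith
  calc (3 / 4 * n : ℝ) ^ i ≤ ((n + 1 - i : ℕ) : ℝ) ^ i := by gcongr
    _ ≤ n.descFactorial i := by exact_mod_cast Nat.pow_sub_le_descFactorial n i
    _ = n.choose i * i.factorial := by
      rw [Nat.descFactorial_eq_factorial_mul_choose]; push_cast; ring

theorem one_sub_le_pow_mul_pow {p q : ℝ} (hp₀ : 0 ≤ p) (hp₁ : p ≤ 1) (hq₀ : 0 ≤ q)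
    (hq₁ : q ≤ 1) (m n : ℕ) : 1 - (m * p + n * q) ≤ (1 - p) ^ m * (1 - q) ^ n := by
  have hA := one_add_mul_sub_le_pow (a := 1 - p) (by linarith) m
  have hB := one_add_mul_sub_le_pow (a := 1 - q) (by linarith) n
  have hA₁ : (1 - p) ^ m ≤ 1 := pow_le_one₀ (by linarith) (by linarith)
  have hB₁ : (1 - q) ^ n ≤ 1 := pow_le_one₀ (by linarith) (by linarith)
  nlinarith [mul_nonneg (sub_nonneg.2 hA₁) (sub_nonneg.2 hB₁)]

theorem sum_Icc_pow_div_factorial_le {a : ℝ} (ha₀ : 0 ≤ a) (ha₁ : a < 1) (r N : ℕ) :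
    ∑ k ∈ Icc r N, a ^ k / k.factorial ≤ a ^ r / r.factorial / (1 - a) := by
  calc ∑ k ∈ Icc r N, a ^ k / k.factorial ≤ ∑ k ∈ Ico r (N + 1), a ^ k / r.factorial := by
        rw [← Ico_add_one_right_eq_Icc]
        refine sum_le_sum fun k hk => ?_
        gcongr
        exact (mem_Ico.mp hk).1
    _ ≤ a ^ r / (1 - a) / r.factorial := by
        rw [← sum_div]; gcongr; exact geom_sum_Ico_le_of_lt_one ha₀ ha₁
    _ = a ^ r / r.factorial / (1 - a) := div_right_comm _ _ _

section TwoBinomials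

variable {m n : ℕ} {p q : ℝ}

theorem twoBinomialPMF_nonneg (hp₀ : 0 ≤ p) (hp₁ : p ≤ 1) (hq₀ : 0 ≤ q) (hq₁ : q ≤ 1)
    (k : ℕ) : 0 ≤ twoBinomialPMF m n p q k := by
  unfold twoBinomialPMF
  have : 0 ≤ 1 - p := by linarith
  have : 0 ≤ 1 - q := by linarith
  positivity

theorem twoBinomialPMF_le (hp₀ : 0 ≤ p) (hp₁ : p ≤ 1) (hq₀ : 0 ≤ q) (hq₁ : q ≤ 1)
    (k : ℕ) : twoBinomialPMF m n p q k ≤ (m * p + n * q) ^ k / k.factorial := by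
  rw [← add_pow_div_factorial]
  refine sum_le_sum fun i _ => ?_
  have hm := Nat.choose_le_pow_div (α := ℝ) i m
  have hn := Nat.choose_le_pow_div (α := ℝ) (k - i) n
  have hp' : (1 - p) ^ (m - i) ≤ 1 := pow_le_one₀ (by linarith) (by linarith)
  have hq' : (1 - q) ^ (n - (k - i)) ≤ 1 := pow_le_one₀ (by linarith) (by linarith)
  calc _ ≤ (m : ℝ) ^ i / i.factorial * p ^ i * 1 *
        ((n : ℝ) ^ (k - i) / (k - i).factorial) * q ^ (k - i) * 1 := by
        have : 0 ≤ 1 - p := by linarith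
        have : 0 ≤ 1 - q := by linarith
        gcongr
    _ = _ := by rw [mul_pow, mul_pow]; ring

theorem le_twoBinomialPMF (hp₀ : 0 ≤ p) (hp₁ : p ≤ 1) (hq₀ : 0 ≤ q) (hq₁ : q ≤ 1)
    {k : ℕ} (hm : 4 * k ≤ m) (hn : 4 * k ≤ n) :
    (1 - p) ^ m * (1 - q) ^ n * ((3 / 4 * (m * p + n * q)) ^ k / k.factorial) ≤
      twoBinomialPMF m n p q k := by
  have h3p : 0 ≤ 1 - p := by linarith
  have h3q : 0 ≤ 1 - q := by linarith
  rw [mul_add, ← mul_assoc, ← mul_assoc, ← add_pow_div_factorial, mul_sum]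
  refine sum_le_sum fun i hi => ?_
  have hik : i ≤ k := Nat.lt_succ_iff.mp (mem_range.mp hi)
  have cm := pow_div_factorial_le_choose (n := m) (i := i) (by omega)
  have cn := pow_div_factorial_le_choose (n := n) (i := k - i) (by omega)
  have dm : (1 - p) ^ m ≤ (1 - p) ^ (m - i) := pow_le_pow_of_le_one h3p (by linarith) (by omega)
  have dn : (1 - q) ^ n ≤ (1 - q) ^ (n - (k - i)) :=
    pow_le_pow_of_le_one h3q (by linarith) (by omega)
  calc _ = (1 - p) ^ m * (1 - q) ^ n * ((3 / 4 * m : ℝ) ^ i / i.factorial * p ^ i *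
        ((3 / 4 * n : ℝ) ^ (k - i) / (k - i).factorial * q ^ (k - i))) := by
        rw [mul_pow, mul_pow]; ring
    _ ≤ (1 - p) ^ (m - i) * (1 - q) ^ (n - (k - i)) *
        (m.choose i * p ^ i * (n.choose (k - i) * q ^ (k - i))) := by gcongr
    _ = _ := by ring

theorem sum_Icc_twoBinomialPMF_le (hp₀ : 0 ≤ p) (hp₁ : p ≤ 1) (hq₀ : 0 ≤ q) (hq₁ : q ≤ 1)
    (hlt : m * p + n * q < 1) (r N : ℕ) :
    ∑ k ∈ Icc r N, twoBinomialPMF m n p q k ≤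
      (m * p + n * q) ^ r / r.factorial / (1 - (m * p + n * q)) :=
  (sum_le_sum fun k _ => twoBinomialPMF_le hp₀ hp₁ hq₀ hq₁ k).trans
    (sum_Icc_pow_div_factorial_le (by positivity) hlt r N)

theorem le_sum_Icc_twoBinomialPMF (hp₀ : 0 ≤ p) (hp₁ : p ≤ 1) (hq₀ : 0 ≤ q) (hq₁ : q ≤ 1)
    {r N : ℕ} (hm : 4 * r ≤ m) (hn : 4 * r ≤ n) (hN : r ≤ N) :
    (1 - (m * p + n * q)) * ((3 / 4 * (m * p + n * q)) ^ r / r.factorial) ≤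
      ∑ k ∈ Icc r N, twoBinomialPMF m n p q k :=
  calc _ ≤ (1 - p) ^ m * (1 - q) ^ n * ((3 / 4 * (m * p + n * q)) ^ r / r.factorial) :=
        mul_le_mul_of_nonneg_right (one_sub_le_pow_mul_pow hp₀ hp₁ hq₀ hq₁ m n) (by positivity)
    _ ≤ twoBinomialPMF m n p q r := le_twoBinomialPMF hp₀ hp₁ hq₀ hq₁ hm hn
    _ ≤ _ := single_le_sum (fun k _ => twoBinomialPMF_nonneg hp₀ hp₁ hq₀ hq₁ k)
        (mem_Icc.mpr ⟨le_rfl, hN⟩)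

end TwoBinomials

theorem pi_r_scale_down_general (kp kq t xt r : ℕ) (x p q : ℝ)
    (hkp : 1 ≤ kp) (hkq : 1 ≤ kq)
    (hx : 1 ≤ x) (hxt : (xt : ℝ) = x * t)
    (htr : 4 * r ≤ t)
    (hq0 : 0 < q) (hqp : q ≤ p) (hp : p ≤ 1/2)
    (φ : ℝ) (hφ : φ = kp * p + kq * q)
    (hsmall : φ * x * t ≤ 1/3)
    (π : ℕ → ℝ)
    (hπ : ∀ s : ℕ, π s = ∑ r' ∈ Finset.Icc r ((kp + kq) * s),
      ∑ i ∈ Finset.range (r' + 1),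
        ((kp * s).choose i : ℝ) * p ^ i * (1 - p) ^ (kp * s - i) *
        ((kq * s).choose (r' - i) : ℝ) * q ^ (r' - i) * (1 - q) ^ (kq * s - (r' - i))) :
    π t ≤ 4 * (4 / (3 * x * (1 - p))) ^ r * π xt := by
  have hp₀ : 0 ≤ p := hq0.le.trans hqp
  have ha : ((kp * t : ℕ) : ℝ) * p + ((kq * t : ℕ) : ℝ) * q = φ * t := by
    rw [hφ]; push_cast; ring
  have hb : ((kp * xt : ℕ) : ℝ) * p + ((kq * xt : ℕ) : ℝ) * q = φ * x * t := by
    rw [hφ]; push_cast; rw [hxt]; ring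
  have ha₀ : 0 ≤ φ * t := by rw [← ha]; positivity
  have ha₁ : φ * t ≤ 1 / 3 := by nlinarith
  have htxt : t ≤ xt := by exact_mod_cast (show (t : ℝ) ≤ xt by rw [hxt]; nlinarith)
  have hupper : π t ≤ 3 / 2 * ((φ * t) ^ r / r.factorial) :=
    calc π t ≤ (φ * t) ^ r / r.factorial / (1 - φ * t) := by
          rw [hπ, ← ha]
          exact sum_Icc_twoBinomialPMF_le hp₀ (by linarith) hq0.le (by linarith)
            (by rw [ha]; linarith) r _
      _ ≤ _ := by
          rw [div_le_iff₀ (by linarith)]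
          nlinarith [show 0 ≤ (φ * t) ^ r / r.factorial by positivity]
  have hlower : (1 - φ * x * t) * ((3 / 4 * (φ * x * t)) ^ r / r.factorial) ≤ π xt := by
    rw [← hb, hπ]
    exact le_sum_Icc_twoBinomialPMF hp₀ (by linarith) hq0.le (by linarith)
      (by nlinarith) (by nlinarith) (by nlinarith)
  have hbase : φ * t ≤ 4 / (3 * x * (1 - p)) * (3 / 4 * (φ * x * t)) := by
    have hx₀ : x ≠ 0 := by positivity
    have h1p : (1 : ℝ) - p ≠ 0 := by linarith
    refine (le_div_self ha₀ (by linarith) (by linarith : 1 - p ≤ 1)).trans_eq ?_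
    field_simp
  set c := 4 / (3 * x * (1 - p))
  have hc : 0 < c := div_pos four_pos (by nlinarith)
  have hB : 0 ≤ (3 / 4 * (φ * x * t)) ^ r / r.factorial := by rw [← hb]; positivity
  calc π t ≤ 3 / 2 * ((c * (3 / 4 * (φ * x * t))) ^ r / r.factorial) := by
        refine hupper.trans ?_; gcongr
    _ ≤ 4 * c ^ r * (2 / 3 * ((3 / 4 * (φ * x * t)) ^ r / r.factorial)) := by
        rw [mul_pow, mul_div_assoc]
        nlinarith [mul_nonneg (pow_nonneg hc.le r) hB]
    _ ≤ 4 * c ^ r * π xt := by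
        gcongr
        exact le_trans (by nlinarith) hlower

theorem pi_r_scale_down (kp kq t xt r : ℕ) (x p q : ℝ)
    (hkp : 1 ≤ kp) (hkq : 1 ≤ kq) (ht : 1 ≤ t) (hxt0 : 1 ≤ xt)
    (hx : 1 ≤ x) (hxt : (xt : ℝ) = x * t)
    (hr : 1 ≤ r) (htr : 4 * r ≤ t)
    (hq0 : 0 < q) (hqp : q ≤ p) (hp : p ≤ 1/2)
    (φ : ℝ) (hφ : φ = kp * p + kq * q)
    (hsmall : φ * x * t ≤ 1/3)
    (hbig : 3 * x * (1 - p) > 4)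
    (π : ℕ → ℝ)
    (hπ : ∀ s : ℕ, π s = ∑ r' ∈ Finset.Icc r ((kp + kq) * s),
      ∑ i ∈ Finset.range (r' + 1),
        ((kp * s).choose i : ℝ) * p ^ i * (1 - p) ^ (kp * s - i) *
        ((kq * s).choose (r' - i) : ℝ) * q ^ (r' - i) * (1 - q) ^ (kq * s - (r' - i))) :
    π t ≤ 4 * (4 / (3 * x * (1 - p))) ^ r * π xt :=
  pi_r_scale_down_general kp kq t xt r x p q hkp hkq hx hxt htr hq0 hqp hp φ hφ hsmall π hπ
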